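/- arXiv:2107.11858 — 3 statements merged into one kernel-verified Lean document; each statement's English description precedes it below -/
import Mathlib

section
/- Let (U,d_U) and (V,d_V) be finite pseudometric spaces and c : U × V → ℝ≥0 satisfy |c(u,v) − c(u',v')| ≤ M(d_U(u,u') + d_V(v,v')). Then for any η > 0 and g : V → ℝ, the soft-min transform g̃(u) = −η log Σ_v exp((g(v) − c(u,v))/η) is M-Lipschitz with respect to d_U: |g̃(u) − g̃(u')| ≤ M d_U(u,u'). -/
open MeasureTheory Filter Topology

noncomputable section

/-- The left shift on sequence space. -/
def shiftMap (U : Type*) : (ℕ → U) → (ℕ → U) := fun x n => x (n + 1)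

/-- A measure on sequence space is stationary if it is invariant under the left shift. -/
def Stationary {U : Type*} [MeasurableSpace U] (μ : Measure (ℕ → U)) : Prop :=
  μ.map (shiftMap U) = μ

/-- The joint left shift on a product of two sequence spaces. -/
def shiftMap2 (X Y : Type*) : (ℕ → X) × (ℕ → Y) → (ℕ → X) × (ℕ → Y) :=
  fun p => (shiftMap X p.1, shiftMap Y p.2)

/-- `λ` is a joining of `μ` and `ν`: a coupling that is invariant under the joint shift. -/
def IsJoining {X Y : Type*} [MeasurableSpace X] [MeasurableSpace Y]
    (lam : Measure ((ℕ → X) × (ℕ → Y))) (μ : Measure (ℕ → X)) (ν : Measure (ℕ → Y)) : Prop :=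
  lam.map Prod.fst = μ ∧ lam.map Prod.snd = ν ∧ lam.map (shiftMap2 X Y) = lam

/-- The expected one-letter cost of a coupling of processes. -/
def costOne {X Y : Type*} [MeasurableSpace X] [MeasurableSpace Y] (c : X → Y → ℝ)
    (lam : Measure ((ℕ → X) × (ℕ → Y))) : ℝ :=
  ∫ p, c (p.1 0) (p.2 0) ∂lam

/-- The optimal joining cost. -/
def ojCost {X Y : Type*} [MeasurableSpace X] [MeasurableSpace Y] (c : X → Y → ℝ)
    (μ : Measure (ℕ → X)) (ν : Measure (ℕ → Y)) : ℝ :=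
  sInf (costOne c '' {lam | IsJoining lam μ ν})

/-- The limiting average cost. -/
def cbar {X Y : Type*} (c : X → Y → ℝ) (x : ℕ → X) (y : ℕ → Y) : ℝ :=
  limsup (fun k : ℕ => (∑ l ∈ Finset.range k, c (x l) (y l)) / k) atTop

/-- Optimal transport cost between two measures. -/
def otCost {U V : Type*} [MeasurableSpace U] [MeasurableSpace V] (c : U → V → ℝ)
    (α : Measure U) (β : Measure V) : ℝ :=
  sInf ((fun π : Measure (U × V) => ∫ p, c p.1 p.2 ∂π) ''
    {π | π.map Prod.fst = α ∧ π.map Prod.snd = β})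

/-- Shannon entropy of a measure on a finite space. -/
def shEntropy {U : Type*} [Fintype U] [MeasurableSpace U] (α : Measure U) : ℝ :=
  -∑ u : U, ((α {u}).toReal * Real.log (α {u}).toReal)

/-- Entropic optimal transport cost. -/
def eotCost {U V : Type*} [Fintype U] [Fintype V] [MeasurableSpace U] [MeasurableSpace V]
    (η : ℝ) (c : U → V → ℝ) (α : Measure U) (β : Measure V) : ℝ :=
  sInf ((fun π : Measure (U × V) => (∫ p, c p.1 p.2 ∂π) - η * shEntropy π) ''
    {π | π.map Prod.fst = α ∧ π.map Prod.snd = β})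

/-- The `k`-dimensional marginal of a process measure. -/
def marginal {U : Type*} [MeasurableSpace U] (k : ℕ) (μ : Measure (ℕ → U)) :
    Measure (Fin k → U) :=
  μ.map (fun x (i : Fin k) => x (i : ℕ))

/-- The `k`-step additive cost. -/
def ck {X Y : Type*} (c : X → Y → ℝ) (k : ℕ) : (Fin k → X) → (Fin k → Y) → ℝ :=
  fun a b => ∑ i, c (a i) (b i)

/-- The `k`-dimensional marginal of a measure on a product of sequence spaces. -/
def marginal2 {X Y : Type*} [MeasurableSpace X] [MeasurableSpace Y] (k : ℕ)
    (lam : Measure ((ℕ → X) × (ℕ → Y))) : Measure ((Fin k → X) × (Fin k → Y)) :=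
  lam.map (fun p => (fun i : Fin k => p.1 (i : ℕ), fun i : Fin k => p.2 (i : ℕ)))

/-- Entropy rate of a process measure on a finite alphabet. -/
def entropyRate {U : Type*} [Fintype U] [MeasurableSpace U] (γ : Measure (ℕ → U)) : ℝ :=
  limsup (fun k : ℕ => shEntropy (marginal k γ) / k) atTop

/-- Entropy rate of a joint process measure. -/
def entropyRate2 {X Y : Type*} [Fintype X] [Fintype Y] [MeasurableSpace X] [MeasurableSpace Y]
    (lam : Measure ((ℕ → X) × (ℕ → Y))) : ℝ :=
  limsup (fun k : ℕ => shEntropy (marginal2 k lam) / k) atTop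

/-- The entropic optimal joining cost. -/
def eojCost {X Y : Type*} [Fintype X] [Fintype Y] [MeasurableSpace X] [MeasurableSpace Y]
    (η : ℝ) (c : X → Y → ℝ) (μ : Measure (ℕ → X)) (ν : Measure (ℕ → Y)) : ℝ :=
  sInf ((fun lam => costOne c lam - η * entropyRate2 lam) '' {lam | IsJoining lam μ ν})

/-- `ρ` is the independent `k`-block process induced by `γ`: every `m·k`-dimensional marginal,
grouped into `m` blocks of length `k`, is the `m`-fold product of `γ`. -/
def IsIndepBlock {U : Type*} [MeasurableSpace U] (k : ℕ) (γ : Measure (Fin k → U))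
    (ρ : Measure (ℕ → U)) : Prop :=
  IsProbabilityMeasure ρ ∧
    ∀ m : ℕ, ρ.map (fun x (j : Fin m) (i : Fin k) => x (j * k + i)) =
      Measure.pi (fun _ : Fin m => γ)

/-- Randomizing the start of a process over the first `k` coordinates. -/
def randStart {U : Type*} [MeasurableSpace U] (k : ℕ) (ρ : Measure (ℕ → U)) :
    Measure (ℕ → U) :=
  (k : ENNReal)⁻¹ • ∑ l ∈ Finset.range k, ρ.map ((shiftMap U)^[l])


/-- the soft-min transform of the semidual of entropic optimal transport
is `M`-Lipschitz. -/
theorem softmin_transform_lipschitz {U V : Type*} [Fintype U] [Fintype V] [Nonempty V]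
    [PseudoMetricSpace U] [PseudoMetricSpace V]
    (c : U → V → ℝ) (hc0 : ∀ u v, 0 ≤ c u v) (M : ℝ)
    (hc : ∀ u u' v v', |c u v - c u' v'| ≤ M * (dist u u' + dist v v'))
    (η : ℝ) (hη : 0 < η) (g : V → ℝ) (u u' : U) :
    |(-η * Real.log (∑ v : V, Real.exp ((g v - c u v) / η))) -
      (-η * Real.log (∑ v : V, Real.exp ((g v - c u' v) / η)))| ≤ M * dist u u' := by
  set S : U → ℝ := fun a => ∑ v : V, Real.exp ((g v - c a v) / η) with hS
  have hSpos : ∀ a, 0 < S a := fun a =>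
    Finset.sum_pos (fun v _ => Real.exp_pos _) Finset.univ_nonempty
  have key : ∀ a b : U, η * Real.log (S b) ≤ M * dist a b + η * Real.log (S a) := by
    intro a b
    have hle : S b ≤ Real.exp (M * dist a b / η) * S a := by
      rw [Finset.mul_sum]
      refine Finset.sum_le_sum fun v _ => ?_
      rw [← Real.exp_add]
      apply Real.exp_le_exp.2
      have h1 : c a v - c b v ≤ M * dist a b := by
        have := hc a b v v
        simp only [dist_self, add_zero] at this
        exact (abs_le.1 this).2.trans (le_of_eq rfl)
      rw [← add_div]
      gcongr
      linarith
    have hlog : Real.log (S b) ≤ M * dist a b / η + Real.log (S a) := by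
      calc Real.log (S b) ≤ Real.log (Real.exp (M * dist a b / η) * S a) :=
            Real.log_le_log (hSpos b) hle
        _ = M * dist a b / η + Real.log (S a) := by
            rw [Real.log_mul (Real.exp_ne_zero _) (hSpos a).ne', Real.log_exp]
    calc η * Real.log (S b) ≤ η * (M * dist a b / η + Real.log (S a)) := by
          exact mul_le_mul_of_nonneg_left hlog hη.le
      _ = M * dist a b + η * Real.log (S a) := by field_simp
  rw [abs_sub_le_iff]
  constructor
  · have h := key u u'
    simp only [hS] at h
    linarith
  · have h := key u' u
    simp only [hS] at h
    rw [dist_comm u' u] at h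
    linarith

end
end

section
/- The stationary k-block process Λ^k[π] built from a coupling π of probability measures α on X^k and β on Y^k is a joining of Λ^k[α] and Λ^k[β], and its one-dimensional expected cost satisfies ∫ c d(Λ^k[π])₁ = (1/k) ∫ c_k dπ. -/
open MeasureTheory Filter Topology

noncomputable section

section AuxiliaryLemmas

open MeasureTheory

/-- Two points of a measurable space are equivalent if no measurable set separates them. -/
def uEq {U : Type*} [MeasurableSpace U] (u v : U) : Prop :=
  ∀ T : Set U, MeasurableSet T → (u ∈ T ↔ v ∈ T)

lemma uEq_refl {U : Type*} [MeasurableSpace U] (u : U) : uEq u u := fun _ _ => Iff.rfl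

lemma uEq_symm {U : Type*} [MeasurableSpace U] {u v : U} (h : uEq u v) : uEq v u :=
  fun T hT => (h T hT).symm

lemma uEq_trans {U : Type*} [MeasurableSpace U] {u v w : U} (h : uEq u v) (h' : uEq v w) :
    uEq u w := fun T hT => (h T hT).trans (h' T hT)

lemma pi_invariant {ι : Type*} {α : ι → Type*} [∀ i, MeasurableSpace (α i)]
    {S : Set (∀ i, α i)} (hS : MeasurableSet S) {z w : ∀ i, α i}
    (h : ∀ i, uEq (z i) (w i)) : z ∈ S ↔ w ∈ S := by
  let m' : MeasurableSpace (∀ i, α i) :=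
  { MeasurableSet' := fun S => ∀ z w : ∀ i, α i, (∀ i, uEq (z i) (w i)) → (z ∈ S ↔ w ∈ S)
    measurableSet_empty := fun z w _ => Iff.rfl
    measurableSet_compl := fun S hS z w h => not_congr (hS z w h)
    measurableSet_iUnion := fun f hf z w h => by
      simp only [Set.mem_iUnion]
      exact exists_congr fun n => hf n z w h }
  have hev : ∀ i, @Measurable _ _ m' _ (fun z : ∀ i, α i => z i) :=
    fun i T hT z w h => h i T hT
  have hid : @Measurable _ _ m' MeasurableSpace.pi (fun x : ∀ i, α i => x) :=
    measurable_pi_iff.mpr hev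
  exact hid hS z w h

lemma bad_null {ι U : Type*} [MeasurableSpace U] [DecidableEq ι]
    (μ : Measure (ι → U)) (f : (ι → U) → ℝ) (hf : AEStronglyMeasurable f μ)
    (c' : U → ℝ) (l : ι)
    (hdiff : ∀ (z : ι → U) (v : U), c' v ≠ c' (z l) → f (Function.update z l v) ≠ f z) :
    μ {z | ∃ v, uEq (z l) v ∧ c' v ≠ c' (z l)} = 0 := by
  obtain ⟨g, hg, hfg⟩ := hf
  have h0 : μ {z | ¬ f z = g z} = 0 := ae_iff.mp hfg
  obtain ⟨M, hsub, hMmeas, hM0⟩ := exists_measurable_superset_of_null h0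
  refine measure_mono_null (fun z hz => ?_) hM0
  obtain ⟨v, hv, hne⟩ := hz
  by_contra hzM
  have hrel : ∀ i, uEq (z i) (Function.update z l v i) := by
    intro i T hT
    rcases eq_or_ne i l with rfl | hi
    · simpa [Function.update_self] using hv T hT
    · simp [Function.update_of_ne hi]
  have hwM : Function.update z l v ∉ M :=
    fun hmem => hzM ((pi_invariant hMmeas hrel).mpr hmem)
  have hz1 : f z = g z := by
    by_contra h; exact hzM (hsub h)
  have hw1 : f (Function.update z l v) = g (Function.update z l v) := by
    by_contra h; exact hwM (hsub h)
  have hgw : g (Function.update z l v) = g z := by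
    have hmem : z ∈ g ⁻¹' {g z} := rfl
    exact (pi_invariant (hg.measurable (measurableSet_singleton (g z))) hrel).mp hmem
  exact hdiff z v hne (hw1.trans (hgw.trans hz1.symm))

/-- The equivalence class of a point under `uEq`. -/
def atomOf {U : Type*} [MeasurableSpace U] (u : U) : Set U := {v | uEq u v}

lemma mem_atomOf {U : Type*} [MeasurableSpace U] {u v : U} : v ∈ atomOf u ↔ uEq u v := Iff.rfl

lemma measurableSet_atomOf {U : Type*} [MeasurableSpace U] [Finite U] (u : U) :
    MeasurableSet (atomOf u) := by
  have h : atomOf u = ⋂₀ {T : Set U | MeasurableSet T ∧ u ∈ T} := by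
    ext v
    rw [Set.mem_sInter]
    constructor
    · intro hv T hT
      exact (hv T hT.1).mp hT.2
    · intro hv T hT
      constructor
      · intro hu; exact hv T ⟨hT, hu⟩
      · intro hvT
        by_contra hu
        exact hv Tᶜ ⟨hT.compl, hu⟩ hvT
  rw [h]
  exact MeasurableSet.sInter (Set.to_countable _) fun T hT => hT.1

lemma measurableSet_of_saturated {U : Type*} [MeasurableSpace U] [Finite U] {S : Set U}
    (h : ∀ u v, uEq u v → u ∈ S → v ∈ S) : MeasurableSet S := by
  have hS : S = ⋃ u ∈ S, atomOf u := by
    ext v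
    simp only [Set.mem_iUnion]
    constructor
    · intro hv; exact ⟨v, hv, uEq_refl v⟩
    · rintro ⟨u, hu, huv⟩; exact h u v huv hu
  rw [hS]
  exact MeasurableSet.biUnion (Set.to_countable _) fun u _ => measurableSet_atomOf u

lemma badSet_measurable {U : Type*} [MeasurableSpace U] [Finite U] (c' : U → ℝ) :
    MeasurableSet {u : U | ∃ v, uEq u v ∧ c' v ≠ c' u} := by
  apply measurableSet_of_saturated
  rintro u u' huu' ⟨v, huv, hne⟩
  rcases eq_or_ne (c' u') (c' u) with he | he
  · exact ⟨v, uEq_trans (uEq_symm huu') huv, fun h => hne (h.trans he)⟩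
  · exact ⟨u, uEq_symm huu', Ne.symm he⟩

lemma aesm_of_bad_null {U : Type*} [MeasurableSpace U] [Fintype U] (ν : Measure U)
    (c' : U → ℝ) (h : ν {u | ∃ v, uEq u v ∧ c' v ≠ c' u} = 0) :
    AEStronglyMeasurable c' ν := by
  classical
  set g : U → ℝ := fun u => sSup (c' '' atomOf u) with hgdef
  have hatom_eq : ∀ u v : U, uEq u v → atomOf u = atomOf v := by
    intro u v huv
    ext w
    exact ⟨fun h' => uEq_trans (uEq_symm huv) h', fun h' => uEq_trans huv h'⟩
  have hgeq : ∀ u v : U, uEq u v → g u = g v := by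
    intro u v huv
    simp only [hgdef, hatom_eq u v huv]
  have hgmeas : Measurable g := by
    intro s _
    apply measurableSet_of_saturated
    intro u v huv hu
    have : g v = g u := (hgeq u v huv).symm
    simpa [Set.mem_preimage, this] using hu
  have hsub : {u | ¬ c' u = g u} ⊆ {u | ∃ v, uEq u v ∧ c' v ≠ c' u} := by
    intro u hu
    by_contra hB
    apply hu
    have himg : c' '' atomOf u = {c' u} := by
      apply Set.Subset.antisymm
      · rintro r ⟨v, hv, rfl⟩
        rw [Set.mem_singleton_iff]
        by_contra hne
        exact hB ⟨v, hv, hne⟩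
      · rintro r hr
        rw [Set.mem_singleton_iff] at hr
        exact ⟨u, uEq_refl u, hr.symm⟩
    show c' u = g u
    rw [hgdef]
    simp [himg]
  exact ⟨g, hgmeas.stronglyMeasurable, ae_iff.mpr (measure_mono_null hsub h)⟩

lemma aesm_of_eval_bad_null {ι U : Type*} [MeasurableSpace U] [Fintype U]
    (μ : Measure (ι → U)) (c' : U → ℝ) (l : ι)
    (h : μ {z | ∃ v, uEq (z l) v ∧ c' v ≠ c' (z l)} = 0) :
    AEStronglyMeasurable c' (μ.map (fun z => z l)) := by
  apply aesm_of_bad_null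
  rw [Measure.map_apply (measurable_pi_apply l) (badSet_measurable c')]
  exact h

lemma measurable_blockMap {U : Type*} [MeasurableSpace U] (k m : ℕ) :
    Measurable (fun (x : ℕ → U) (j : Fin m) (i : Fin k) => x (j * k + i)) :=
  measurable_pi_lambda _ fun _ => measurable_pi_lambda _ fun _ => measurable_pi_apply _

lemma measurable_shiftMap (U : Type*) [MeasurableSpace U] : Measurable (shiftMap U) :=
  measurable_pi_lambda _ fun n => measurable_pi_apply _

lemma shiftMap_iterate (U : Type*) (l : ℕ) (x : ℕ → U) :
    (shiftMap U)^[l] x = fun n => x (n + l) := by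
  induction l generalizing x with
  | zero => funext n; simp
  | succ l ih =>
      rw [Function.iterate_succ_apply, ih]
      funext n
      simp [shiftMap, Nat.add_assoc]

lemma map_finset_sum' {δ β ι : Type*} [MeasurableSpace δ] [MeasurableSpace β]
    {f : δ → β} (hf : Measurable f) (s : Finset ι) (μ : ι → Measure δ) :
    (∑ i ∈ s, μ i).map f = ∑ i ∈ s, (μ i).map f := by
  induction s using Finset.cons_induction with
  | empty => simp
  | cons a s ha ih => rw [Finset.sum_cons, Finset.sum_cons, Measure.map_add _ _ hf, ih]

lemma pi_map_comp {m : ℕ} {W W' : Type*} [MeasurableSpace W] [MeasurableSpace W']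
    (γ : Measure W) [IsProbabilityMeasure γ] {φ : W → W'} (hφ : Measurable φ) :
    (Measure.pi fun _ : Fin m => γ).map (fun b (j : Fin m) => φ (b j)) =
      Measure.pi (fun _ : Fin m => γ.map φ) := by
  haveI : IsProbabilityMeasure (γ.map φ) := Measure.isProbabilityMeasure_map hφ.aemeasurable
  have hmeas : Measurable (fun (b : Fin m → W) (j : Fin m) => φ (b j)) :=
    measurable_pi_lambda _ fun j => hφ.comp (measurable_pi_apply j)
  refine (Measure.pi_eq fun s hs => ?_).symm
  rw [Measure.map_apply hmeas (MeasurableSet.univ_pi hs)]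
  have hpre : (fun (b : Fin m → W) (j : Fin m) => φ (b j)) ⁻¹' Set.pi Set.univ s
      = Set.pi Set.univ fun j => φ ⁻¹' s j := by
    ext b; simp [Set.mem_pi]
  rw [hpre, Measure.pi_pi]
  exact Finset.prod_congr rfl fun j _ => (Measure.map_apply hφ (hs j)).symm

lemma pi_dropHead {m : ℕ} {W : Type*} [MeasurableSpace W] (γ : Measure W)
    [IsProbabilityMeasure γ] :
    (Measure.pi fun _ : Fin (m+1) => γ).map (fun b (j : Fin m) => b j.succ) =
      Measure.pi (fun _ : Fin m => γ) := by
  have hmeas : Measurable (fun (b : Fin (m+1) → W) (j : Fin m) => b j.succ) :=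
    measurable_pi_lambda _ fun j => measurable_pi_apply _
  refine (Measure.pi_eq fun s hs => ?_).symm
  rw [Measure.map_apply hmeas (MeasurableSet.univ_pi hs)]
  have hpre : (fun (b : Fin (m+1) → W) (j : Fin m) => b j.succ) ⁻¹' Set.pi Set.univ s
      = Set.pi Set.univ (fun j : Fin (m+1) => Fin.cases Set.univ s j) := by
    ext b
    simp only [Set.mem_preimage, Set.mem_pi, Set.mem_univ, true_implies]
    constructor
    · intro h j
      induction j using Fin.cases with
      | zero => simp
      | succ i => simpa using h i
    · intro h i
      simpa using h i.succ
  rw [hpre, Measure.pi_pi, Fin.prod_univ_succ]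
  simp

lemma pi_one_eval {W : Type*} [MeasurableSpace W] (γ : Measure W) [IsProbabilityMeasure γ] :
    (Measure.pi fun _ : Fin 1 => γ).map (fun b => b 0) = γ := by
  ext S hS
  rw [Measure.map_apply (measurable_pi_apply 0) hS]
  have h : (fun b : Fin 1 → W => b 0) ⁻¹' S = Set.pi Set.univ (fun _ : Fin 1 => S) := by
    ext b
    simp [Set.mem_pi, Fin.forall_fin_one]
  rw [h, Measure.pi_pi]
  simp

lemma indepBlock_unique {U : Type*} [MeasurableSpace U] {k : ℕ} (hk : 0 < k)
    {γ₀ : Measure (Fin k → U)} {ρ₁ ρ₂ : Measure (ℕ → U)}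
    (h₁ : IsIndepBlock k γ₀ ρ₁) (h₂ : IsIndepBlock k γ₀ ρ₂) : ρ₁ = ρ₂ := by
  haveI := h₁.1; haveI := h₂.1
  refine ext_of_generate_finite (measurableCylinders fun _ : ℕ => U)
    generateFrom_measurableCylinders.symm isPiSystem_measurableCylinders
    (fun t ht => ?_) (by simp)
  obtain ⟨I, S, hS, rfl⟩ := (mem_measurableCylinders t).mp ht
  set m := I.sup id + 1 with hm
  have hIm : ∀ i : I, (i : ℕ) < m * k := by
    intro i
    calc (i : ℕ) < m := Nat.lt_succ_of_le (Finset.le_sup (f := id) i.2)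
    _ ≤ m * k := Nat.le_mul_of_pos_right _ hk
  set h : (Fin m → Fin k → U) → (∀ i : I, U) := fun b i =>
    b ⟨(i : ℕ) / k, (Nat.div_lt_iff_lt_mul hk).mpr (hIm i)⟩ ⟨(i : ℕ) % k, Nat.mod_lt _ hk⟩
    with hh
  have hmeas : Measurable h :=
    measurable_pi_lambda _ fun i => (measurable_pi_apply _).comp (measurable_pi_apply _)
  have hfact : ∀ x : ℕ → U, I.restrict x = h (fun (j : Fin m) (i : Fin k) => x (j * k + i)) := by
    intro x
    funext i
    show x i = x ((i : ℕ) / k * k + (i : ℕ) % k)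
    rw [Nat.div_add_mod']
  have key : ∀ ρ : Measure (ℕ → U), IsIndepBlock k γ₀ ρ →
      ρ (cylinder I S) = Measure.pi (fun _ : Fin m => γ₀) (h ⁻¹' S) := by
    intro ρ hρ
    have hcyl : cylinder I S
        = (fun (x : ℕ → U) (j : Fin m) (i : Fin k) => x (j * k + i)) ⁻¹' (h ⁻¹' S) := by
      ext x
      show I.restrict x ∈ S ↔ _
      rw [hfact x]
      rfl
    rw [hcyl, ← Measure.map_apply (measurable_blockMap k m) (hmeas hS), hρ.2 m]
  rw [key ρ₁ h₁, key ρ₂ h₂]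

lemma indepBlock_eval {U : Type*} [MeasurableSpace U] {k : ℕ}
    {γ₀ : Measure (Fin k → U)} [IsProbabilityMeasure γ₀] {ρ : Measure (ℕ → U)}
    (hρ : IsIndepBlock k γ₀ ρ) (i : Fin k) :
    ρ.map (fun z => z (i : ℕ)) = γ₀.map (fun b => b i) := by
  have h1 := hρ.2 1
  have hcomp : (fun z : ℕ → U => z (i : ℕ))
      = (fun b : Fin 1 → Fin k → U => b 0 i)
        ∘ (fun (x : ℕ → U) (j : Fin 1) (i' : Fin k) => x (j * k + i')) := by
    funext x
    simp [Function.comp]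
  have hg1 : Measurable (fun b : Fin 1 → Fin k → U => b 0 i) :=
    (measurable_pi_apply i).comp (measurable_pi_apply 0)
  have hg2 : Measurable (fun a : Fin k → U => a i) := measurable_pi_apply i
  have hg3 : Measurable (fun b : Fin 1 → Fin k → U => b 0) := measurable_pi_apply 0
  rw [hcomp, ← Measure.map_map hg1 (measurable_blockMap k 1), h1]
  have hcomp2 : (fun b : Fin 1 → Fin k → U => b 0 i)
      = (fun a : Fin k → U => a i) ∘ (fun b : Fin 1 → Fin k → U => b 0) := rfl
  rw [hcomp2, ← Measure.map_map hg2 hg3, pi_one_eval]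

lemma indepBlock_comp {U V : Type*} [MeasurableSpace U] [MeasurableSpace V] {k : ℕ}
    {γ₀ : Measure (Fin k → U)} [IsProbabilityMeasure γ₀] {ρ : Measure (ℕ → U)}
    (hρ : IsIndepBlock k γ₀ ρ) (g : U → V) (hg : Measurable g) :
    IsIndepBlock k (γ₀.map fun (a : Fin k → U) (i : Fin k) => g (a i))
      (ρ.map fun (z : ℕ → U) (n : ℕ) => g (z n)) := by
  haveI := hρ.1
  have hcm : Measurable fun (z : ℕ → U) (n : ℕ) => g (z n) :=
    measurable_pi_lambda _ fun n => hg.comp (measurable_pi_apply n)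
  have hφ : Measurable fun (a : Fin k → U) (i : Fin k) => g (a i) :=
    measurable_pi_lambda _ fun i => hg.comp (measurable_pi_apply i)
  refine ⟨Measure.isProbabilityMeasure_map hcm.aemeasurable, fun m => ?_⟩
  have hψ : Measurable (fun (b : Fin m → Fin k → U) (j : Fin m) (i : Fin k) => g (b j i)) :=
    measurable_pi_lambda _ fun j => measurable_pi_lambda _ fun i =>
      hg.comp ((measurable_pi_apply i).comp (measurable_pi_apply j))
  rw [Measure.map_map (measurable_blockMap k m) hcm]
  have hcomp : (fun (x : ℕ → V) (j : Fin m) (i : Fin k) => x (j * k + i))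
        ∘ (fun (z : ℕ → U) (n : ℕ) => g (z n))
      = (fun (b : Fin m → Fin k → U) (j : Fin m) (i : Fin k) => g (b j i))
        ∘ (fun (x : ℕ → U) (j : Fin m) (i : Fin k) => x (j * k + i)) := rfl
  rw [hcomp, ← Measure.map_map hψ (measurable_blockMap k m), hρ.2 m]
  exact pi_map_comp γ₀ hφ

lemma indepBlock_shiftk {U : Type*} [MeasurableSpace U] {k : ℕ} (hk : 0 < k)
    {γ₀ : Measure (Fin k → U)} [IsProbabilityMeasure γ₀] {ρ : Measure (ℕ → U)}
    (hρ : IsIndepBlock k γ₀ ρ) : ρ.map ((shiftMap U)^[k]) = ρ := by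
  haveI := hρ.1
  refine indepBlock_unique hk ⟨?_, fun m => ?_⟩ hρ
  · exact Measure.isProbabilityMeasure_map ((measurable_shiftMap U).iterate k).aemeasurable
  · rw [Measure.map_map (measurable_blockMap k m) ((measurable_shiftMap U).iterate k)]
    have hcomp : (fun (x : ℕ → U) (j : Fin m) (i : Fin k) => x (j * k + i)) ∘ (shiftMap U)^[k]
        = (fun (b : Fin (m+1) → Fin k → U) (j : Fin m) => b j.succ)
          ∘ (fun (x : ℕ → U) (j : Fin (m+1)) (i : Fin k) => x (j * k + i)) := by
      funext x
      funext j i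
      simp only [Function.comp_apply, shiftMap_iterate, Fin.val_succ]
      congr 1
      ring
    have hdm : Measurable (fun (b : Fin (m+1) → Fin k → U) (j : Fin m) => b j.succ) :=
      measurable_pi_lambda _ fun j => measurable_pi_apply _
    rw [hcomp, ← Measure.map_map hdm (measurable_blockMap k (m+1)), hρ.2 (m+1)]
    exact pi_dropHead γ₀

lemma randStart_map_comp {U V : Type*} [MeasurableSpace U] [MeasurableSpace V] (k : ℕ)
    (ρ : Measure (ℕ → U)) (g : U → V) (hg : Measurable g) :
    (randStart k ρ).map (fun z n => g (z n)) = randStart k (ρ.map (fun z n => g (z n))) := by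
  have hcm : Measurable fun (z : ℕ → U) (n : ℕ) => g (z n) :=
    measurable_pi_lambda _ fun n => hg.comp (measurable_pi_apply n)
  unfold randStart
  rw [Measure.map_smul, map_finset_sum' hcm]
  congr 1
  refine Finset.sum_congr rfl fun l _ => ?_
  rw [Measure.map_map hcm ((measurable_shiftMap U).iterate l),
      Measure.map_map ((measurable_shiftMap V).iterate l) hcm]
  congr 1
  funext z
  funext n
  simp [Function.comp, shiftMap_iterate]

lemma randStart_stationary {U : Type*} [MeasurableSpace U] {k : ℕ} (hk : 0 < k)
    (ρ : Measure (ℕ → U)) (hshift : ρ.map ((shiftMap U)^[k]) = ρ) :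
    (randStart k ρ).map (shiftMap U) = randStart k ρ := by
  unfold randStart
  rw [Measure.map_smul, map_finset_sum' (measurable_shiftMap U)]
  congr 1
  have hterm : ∀ l, (ρ.map ((shiftMap U)^[l])).map (shiftMap U) = ρ.map ((shiftMap U)^[l+1]) := by
    intro l
    rw [Measure.map_map (measurable_shiftMap U) ((measurable_shiftMap U).iterate l),
      ← Function.iterate_succ']
  obtain ⟨k', rfl⟩ : ∃ k', k = k' + 1 := ⟨k - 1, by omega⟩
  rw [Finset.sum_congr rfl fun l _ => hterm l]
  rw [Finset.sum_range_succ (fun l => ρ.map ((shiftMap U)^[l+1])) k']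
  rw [Finset.sum_range_succ' (fun l => ρ.map ((shiftMap U)^[l])) k']
  rw [hshift]
  simp

end AuxiliaryLemmas
/-- the stationary `k`-block process built from a coupling `π` of `α` and
`β` is a joining of the stationary `k`-block processes of `α` and `β`, and its expected
one-letter cost is `(1/k) ∫ c_k dπ`. -/
theorem blockProcess_joining_and_cost {X Y : Type*} [Fintype X] [Fintype Y]
    [MeasurableSpace X] [MeasurableSpace Y]
    (c : X → Y → ℝ) (hc : ∀ x y, 0 ≤ c x y)
    (k : ℕ) (hk : 0 < k)
    (α : Measure (Fin k → X)) (β : Measure (Fin k → Y))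
    [IsProbabilityMeasure α] [IsProbabilityMeasure β]
    (π : Measure ((Fin k → X) × (Fin k → Y)))
    (hπ₁ : π.map Prod.fst = α) (hπ₂ : π.map Prod.snd = β)
    (ρ : Measure (ℕ → X × Y))
    (hρ : IsIndepBlock k (π.map (fun p (i : Fin k) => (p.1 i, p.2 i))) ρ)
    (ρα : Measure (ℕ → X)) (hρα : IsIndepBlock k α ρα)
    (ρβ : Measure (ℕ → Y)) (hρβ : IsIndepBlock k β ρβ) :
    IsJoining ((randStart k ρ).map (fun z => (fun n => (z n).1, fun n => (z n).2)))
        (randStart k ρα) (randStart k ρβ) ∧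
      costOne c ((randStart k ρ).map (fun z => (fun n => (z n).1, fun n => (z n).2))) =
        (1 / (k : ℝ)) * ∫ p, ck c k p.1 p.2 ∂π := by
  classical
  haveI hπprob : IsProbabilityMeasure π := by
    constructor
    have h1 : π.map Prod.fst Set.univ = 1 := by rw [hπ₁]; exact measure_univ
    rwa [Measure.map_apply measurable_fst MeasurableSet.univ, Set.preimage_univ] at h1
  set γ : Measure (Fin k → X × Y) := π.map (fun p (i : Fin k) => (p.1 i, p.2 i)) with hγ
  have hpairmeas : Measurable (fun (p : (Fin k → X) × (Fin k → Y)) (i : Fin k) =>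
      (p.1 i, p.2 i)) :=
    measurable_pi_lambda _ fun i =>
      ((measurable_pi_apply i).comp measurable_fst).prodMk
        ((measurable_pi_apply i).comp measurable_snd)
  haveI hγprob : IsProbabilityMeasure γ := Measure.isProbabilityMeasure_map hpairmeas.aemeasurable
  haveI := hρ.1
  haveI := hρα.1
  haveI := hρβ.1
  set c' : X × Y → ℝ := fun q => c q.1 q.2 with hc'
  set sp : (ℕ → X × Y) ≃ᵐ (ℕ → X) × (ℕ → Y) :=
    MeasurableEquiv.arrowProdEquivProdArrow X Y ℕ with hsp
  set spk : (Fin k → X × Y) ≃ᵐ (Fin k → X) × (Fin k → Y) :=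
    MeasurableEquiv.arrowProdEquivProdArrow X Y (Fin k) with hspk
  have hspfun : ⇑sp = fun (z : ℕ → X × Y) => (fun n => (z n).1, fun n => (z n).2) := rfl
  have hsplitmeas : Measurable (fun (z : ℕ → X × Y) => (fun n => (z n).1, fun n => (z n).2)) := by
    rw [← hspfun]; exact sp.measurable
  constructor
  · -- joining
    refine ⟨?_, ?_, ?_⟩
    · -- first marginal
      have hmapfst : Prod.fst ∘ (fun (z : ℕ → X × Y) => ((fun n => (z n).1), fun n => (z n).2))
          = fun z n => (z n).1 := rfl
      rw [Measure.map_map measurable_fst hsplitmeas, hmapfst,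
        randStart_map_comp k ρ Prod.fst measurable_fst]
      have hρres : ρ.map (fun (z : ℕ → X × Y) (n : ℕ) => (z n).1) = ρα := by
        have hcomp := indepBlock_comp hρ Prod.fst measurable_fst
        have hγfst : γ.map (fun (a : Fin k → X × Y) (i : Fin k) => (a i).1) = α := by
          have hfm : Measurable (fun (a : Fin k → X × Y) (i : Fin k) => (a i).1) :=
            measurable_pi_lambda _ fun i => measurable_fst.comp (measurable_pi_apply i)
          rw [hγ, Measure.map_map hfm hpairmeas]
          have hcc : (fun (a : Fin k → X × Y) (i : Fin k) => (a i).1)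
              ∘ (fun (p : (Fin k → X) × (Fin k → Y)) (i : Fin k) => (p.1 i, p.2 i))
              = Prod.fst := rfl
          rw [hcc, hπ₁]
        rw [hγfst] at hcomp
        exact indepBlock_unique hk hcomp hρα
      rw [hρres]
    · -- second marginal
      have hmapsnd : Prod.snd ∘ (fun (z : ℕ → X × Y) => ((fun n => (z n).1), fun n => (z n).2))
          = fun z n => (z n).2 := rfl
      rw [Measure.map_map measurable_snd hsplitmeas, hmapsnd,
        randStart_map_comp k ρ Prod.snd measurable_snd]
      have hρres : ρ.map (fun (z : ℕ → X × Y) (n : ℕ) => (z n).2) = ρβ := by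
        have hcomp := indepBlock_comp hρ Prod.snd measurable_snd
        have hγsnd : γ.map (fun (a : Fin k → X × Y) (i : Fin k) => (a i).2) = β := by
          have hsm : Measurable (fun (a : Fin k → X × Y) (i : Fin k) => (a i).2) :=
            measurable_pi_lambda _ fun i => measurable_snd.comp (measurable_pi_apply i)
          rw [hγ, Measure.map_map hsm hpairmeas]
          have hcc : (fun (a : Fin k → X × Y) (i : Fin k) => (a i).2)
              ∘ (fun (p : (Fin k → X) × (Fin k → Y)) (i : Fin k) => (p.1 i, p.2 i))
              = Prod.snd := rfl
          rw [hcc, hπ₂]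
        rw [hγsnd] at hcomp
        exact indepBlock_unique hk hcomp hρβ
      rw [hρres]
    · -- shift invariance
      have hshift2meas : Measurable (shiftMap2 X Y) :=
        ((measurable_shiftMap X).comp measurable_fst).prodMk
          ((measurable_shiftMap Y).comp measurable_snd)
      rw [Measure.map_map hshift2meas hsplitmeas]
      have hcomm : shiftMap2 X Y ∘ (fun (z : ℕ → X × Y) => (fun n => (z n).1, fun n => (z n).2))
          = (fun (z : ℕ → X × Y) => (fun n => (z n).1, fun n => (z n).2))
            ∘ shiftMap (X × Y) := rfl
      rw [hcomm, ← Measure.map_map hsplitmeas (measurable_shiftMap _),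
        randStart_stationary hk ρ (indepBlock_shiftk hk hρ)]
  · -- cost
    have hLHSbase : costOne c
          ((randStart k ρ).map (fun z => (fun n => (z n).1, fun n => (z n).2)))
        = (k : ℝ)⁻¹ * ∫ z, c' (z 0)
            ∂(∑ l ∈ Finset.range k, ρ.map ((shiftMap (X × Y))^[l])) := by
      have e1 : costOne c
            ((randStart k ρ).map (fun z => (fun n => (z n).1, fun n => (z n).2)))
          = ∫ z, c' (z 0) ∂(randStart k ρ) := by
        unfold costOne
        rw [← hspfun]
        exact integral_map_equiv sp _
      rw [e1]
      unfold randStart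
      rw [integral_smul_measure, ENNReal.toReal_inv, ENNReal.toReal_natCast, smul_eq_mul]
    have hRHSbase : ∫ p, ck c k p.1 p.2 ∂π = ∫ a, (∑ i : Fin k, c' (a i)) ∂γ := by
      have hπeq : π = γ.map ⇑spk := by
        rw [hγ]
        have h1 : (fun (p : (Fin k → X) × (Fin k → Y)) (i : Fin k) => (p.1 i, p.2 i))
            = ⇑spk.symm := rfl
        rw [h1, Measure.map_map spk.measurable spk.symm.measurable,
          MeasurableEquiv.self_comp_symm, Measure.map_id]
      rw [hπeq, integral_map_equiv]
      rfl
    by_cases hCA : ∀ i : Fin k, AEStronglyMeasurable c' (γ.map (fun b => b i))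
    · -- integrable case
      obtain ⟨C, hC⟩ : ∃ C : ℝ, ∀ q : X × Y, ‖c' q‖ ≤ C :=
        ⟨∑ q : X × Y, ‖c' q‖, fun q =>
          Finset.single_le_sum (fun p _ => norm_nonneg _) (Finset.mem_univ q)⟩
      have hmap_l : ∀ i : Fin k,
          (ρ.map ((shiftMap (X × Y))^[(i : ℕ)])).map (fun z => z 0)
            = γ.map (fun b => b i) := by
        intro i
        rw [Measure.map_map (measurable_pi_apply 0) ((measurable_shiftMap _).iterate _)]
        have hco : (fun z : ℕ → X × Y => z 0) ∘ (shiftMap (X × Y))^[(i : ℕ)]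
            = fun z => z (i : ℕ) := by
          funext z; simp [Function.comp, shiftMap_iterate]
        rw [hco, indepBlock_eval hρ i]
      have hG_int : ∀ l ∈ Finset.range k,
          Integrable (fun z : ℕ → X × Y => c' (z 0)) (ρ.map ((shiftMap (X × Y))^[l])) := by
        intro l hl
        haveI : IsProbabilityMeasure (ρ.map ((shiftMap (X × Y))^[l])) :=
          Measure.isProbabilityMeasure_map ((measurable_shiftMap _).iterate l).aemeasurable
        have hl' : l < k := Finset.mem_range.mp hl
        have haesm : AEStronglyMeasurable (fun z : ℕ → X × Y => c' (z 0))
            (ρ.map ((shiftMap (X × Y))^[l])) := by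
          have h1 := hCA ⟨l, hl'⟩
          rw [← hmap_l ⟨l, hl'⟩] at h1
          exact h1.comp_measurable (measurable_pi_apply 0)
        exact ⟨haesm, HasFiniteIntegral.of_bounded (ae_of_all _ fun z => hC _)⟩
      have hsum_eq : ∫ z, c' (z 0) ∂(∑ l ∈ Finset.range k, ρ.map ((shiftMap (X × Y))^[l]))
          = ∑ l ∈ Finset.range k, ∫ z, c' (z 0) ∂(ρ.map ((shiftMap (X × Y))^[l])) :=
        integral_finset_sum_measure hG_int
      have hterm : ∀ i : Fin k,
          ∫ z, c' (z 0) ∂(ρ.map ((shiftMap (X × Y))^[(i : ℕ)]))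
            = ∫ q, c' q ∂(γ.map (fun b => b i)) := by
        intro i
        have hmm := integral_map (μ := ρ.map ((shiftMap (X × Y))^[(i : ℕ)]))
          (φ := fun z : ℕ → X × Y => z 0) (measurable_pi_apply 0).aemeasurable
          (f := c') (by rw [hmap_l i]; exact hCA i)
        rw [hmap_l i] at hmm
        exact hmm.symm
      have hfin : ∑ l ∈ Finset.range k, ∫ z, c' (z 0) ∂(ρ.map ((shiftMap (X × Y))^[l]))
          = ∑ i : Fin k, ∫ q, c' q ∂(γ.map (fun b => b i)) := by
        rw [← Fin.sum_univ_eq_sum_range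
          (fun l => ∫ z, c' (z 0) ∂(ρ.map ((shiftMap (X × Y))^[l]))) k]
        exact Finset.sum_congr rfl fun i _ => hterm i
      have hDterm : ∀ i : Fin k, Integrable (fun a : Fin k → X × Y => c' (a i)) γ := by
        intro i
        exact ⟨(hCA i).comp_measurable (measurable_pi_apply i),
          HasFiniteIntegral.of_bounded (ae_of_all _ fun a => hC _)⟩
      have hD_eq : ∫ a, (∑ i : Fin k, c' (a i)) ∂γ
          = ∑ i : Fin k, ∫ q, c' q ∂(γ.map (fun b => b i)) := by
        rw [integral_finset_sum _ (fun i _ => hDterm i)]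
        exact Finset.sum_congr rfl fun i _ =>
          (integral_map (measurable_pi_apply i).aemeasurable (hCA i)).symm
      rw [hLHSbase, hRHSbase, hsum_eq, hfin, hD_eq, one_div]
    · -- non-integrable case: both sides vanish
      push_neg at hCA
      obtain ⟨i₀, hi₀⟩ := hCA
      have hup : ∀ (a : Fin k → X × Y) (v : X × Y), c' v ≠ c' (a i₀) →
          (fun b : Fin k → X × Y => ∑ i : Fin k, c' (b i)) (Function.update a i₀ v)
            ≠ (fun b : Fin k → X × Y => ∑ i : Fin k, c' (b i)) a := by
        intro a v hne heq
        simp only at heq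
        apply hne
        have h1 : (fun i => c' (Function.update a i₀ v i))
            = Function.update (fun i => c' (a i)) i₀ (c' v) := by
          funext i
          rcases eq_or_ne i i₀ with rfl | hii
          · simp
          · simp [Function.update_of_ne hii]
        rw [h1, Finset.sum_update_of_mem (Finset.mem_univ i₀),
          Finset.sdiff_singleton_eq_erase,
          ← Finset.add_sum_erase Finset.univ (fun i => c' (a i)) (Finset.mem_univ i₀)] at heq
        exact add_right_cancel heq
      have hcontr : γ {a : Fin k → X × Y | ∃ v, uEq (a i₀) v ∧ c' v ≠ c' (a i₀)} = 0 → False :=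
        fun h0 => hi₀ (aesm_of_eval_bad_null γ c' i₀ h0)
      have hRHS0 : ∫ a, (∑ i : Fin k, c' (a i)) ∂γ = 0 := by
        apply integral_undef
        intro hInt
        exact hcontr (bad_null γ _ hInt.aestronglyMeasurable c' i₀ hup)
      have hLHS0 : ∫ z, c' (z 0)
          ∂(∑ l ∈ Finset.range k, ρ.map ((shiftMap (X × Y))^[l])) = 0 := by
        apply integral_undef
        intro hInt
        have hle : ρ.map ((shiftMap (X × Y))^[(i₀ : ℕ)])
            ≤ ∑ l ∈ Finset.range k, ρ.map ((shiftMap (X × Y))^[l]) := by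
          rw [← Finset.add_sum_erase _ _ (Finset.mem_range.mpr i₀.2)]
          exact Measure.le_add_right le_rfl
        have hint0 := hInt.mono_measure hle
        have haesm := hint0.aestronglyMeasurable.comp_measurable
          ((measurable_shiftMap (X × Y)).iterate (i₀ : ℕ))
        have heqf : (fun z : ℕ → X × Y => c' (z 0)) ∘ (shiftMap (X × Y))^[(i₀ : ℕ)]
            = fun z => c' (z (i₀ : ℕ)) := by
          funext z; simp [Function.comp, shiftMap_iterate]
        rw [heqf] at haesm
        have h0 := bad_null ρ _ haesm c' (i₀ : ℕ)
          (fun z v hne => by simpa [Function.update_self] using hne)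
        have h1 := aesm_of_eval_bad_null ρ c' (i₀ : ℕ) h0
        rw [indepBlock_eval hρ i₀] at h1
        exact hi₀ h1
      rw [hLHSbase, hRHSbase, hRHS0, hLHS0]
      simp

end
end

section
/- Suppose E‖μ_k − μ̂_{k,n}‖₁ ≤ u(k,n) with u(k,n) → 0 as n → ∞ for each fixed k. Then for n large enough, the expected entropy estimation error satisfies E|H(μ_k) − H(μ̂_{k,n})| ≤ u(k,n) log(|X|^{3k} / u(k,n)). -/
open MeasureTheory Filter Topology

noncomputable section

/-- The `ℓ₁` distance between two measures on a finite space. -/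
def l1dist {U : Type*} [Fintype U] [MeasurableSpace U] (α β : Measure U) : ℝ :=
  ∑ u : U, |(α {u}).toReal - (β {u}).toReal|

/-- The empirical `k`-block measure built from the first `n` observations of `x`. -/
def empBlock {X : Type*} [MeasurableSpace X] (k n : ℕ) (x : ℕ → X) :
    Measure (Fin k → X) :=
  ((n - k + 1 : ℕ) : ENNReal)⁻¹ •
    ∑ l ∈ Finset.range (n - k + 1), Measure.dirac (fun i : Fin k => x (l + (i : ℕ)))


lemma entropy_term_sub (p q : ℝ) (hp0 : 0 ≤ p) (hp1 : p ≤ 1) (hq0 : 0 ≤ q) (hqp : q ≤ p) :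
    p * Real.log p - q * Real.log q ≤ p - q := by
  rcases eq_or_lt_of_le hq0 with h0 | h0
  · obtain rfl : q = 0 := h0.symm
    have hple : Real.log p ≤ 0 := Real.log_nonpos hp0 hp1
    have := mul_nonpos_of_nonneg_of_nonpos hp0 hple
    simp only [zero_mul, sub_zero]
    linarith
  · have hp0' : 0 < p := lt_of_lt_of_le h0 hqp
    have h2 : Real.log (p / q) ≤ p / q - 1 := Real.log_le_sub_one_of_pos (div_pos hp0' h0)
    have h2' : q * Real.log (p / q) ≤ q * (p / q - 1) := mul_le_mul_of_nonneg_left h2 h0.le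
    rw [Real.log_div hp0'.ne' h0.ne'] at h2'
    have h4 : q * (p / q - 1) = p - q := by field_simp
    rw [h4] at h2'
    have hple : Real.log p ≤ 0 := Real.log_nonpos hp0'.le hp1
    nlinarith [mul_nonpos_of_nonneg_of_nonpos (sub_nonneg.mpr hqp) hple]

lemma entropy_term_sub' (p q : ℝ) (hp1 : p ≤ 1) (hq0 : 0 ≤ q) (hqp : q ≤ p) :
    q * Real.log q - p * Real.log p ≤ -((p - q) * Real.log (p - q)) := by
  rcases eq_or_lt_of_le hq0 with h0 | h0
  · obtain rfl : q = 0 := h0.symm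
    simp
  · rcases eq_or_lt_of_le hqp with h1 | h1
    · rw [h1]; simp
    · have hp0 : 0 < p := lt_trans h0 h1
      have hd : 0 < p - q := sub_pos.mpr h1
      have l1 : Real.log q ≤ Real.log p := Real.log_le_log h0 hqp
      have l2 : Real.log (p - q) ≤ Real.log p := Real.log_le_log hd (by linarith)
      nlinarith [mul_le_mul_of_nonneg_left l1 h0.le, mul_le_mul_of_nonneg_left l2 hd.le]

lemma entropy_term_abs (p q : ℝ) (hp0 : 0 ≤ p) (hp1 : p ≤ 1) (hq0 : 0 ≤ q) (hq1 : q ≤ 1) :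
    |p * Real.log p - q * Real.log q| ≤ -(|p - q| * Real.log |p - q|) + |p - q| := by
  wlog h : q ≤ p generalizing p q
  · have := this q p hq0 hq1 hp0 hp1 (le_of_not_ge h)
    rwa [abs_sub_comm (q * _) _, abs_sub_comm q p] at this
  rw [abs_of_nonneg (sub_nonneg.mpr h)]
  have hd0 : 0 ≤ p - q := sub_nonneg.mpr h
  have hd1 : p - q ≤ 1 := by linarith
  have hlog : Real.log (p - q) ≤ 0 := Real.log_nonpos hd0 hd1
  have hnn : 0 ≤ -((p - q) * Real.log (p - q)) := by nlinarith
  rw [abs_le]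
  constructor
  · have := entropy_term_sub' p q hp1 hq0 h; linarith
  · have := entropy_term_sub p q hp0 hp1 hq0 h; linarith

lemma neg_mul_log_le (t s : ℝ) (ht : 0 ≤ t) (hs : 0 < s) :
    -(t * Real.log t) ≤ t * Real.log s⁻¹ + s - t := by
  rcases eq_or_lt_of_le ht with h0 | h0
  · obtain rfl : t = 0 := h0.symm
    simp; linarith
  · have h2 : Real.log (s / t) ≤ s / t - 1 := Real.log_le_sub_one_of_pos (div_pos hs h0)
    have h2' : t * Real.log (s / t) ≤ t * (s / t - 1) := mul_le_mul_of_nonneg_left h2 h0.le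
    rw [Real.log_div hs.ne' h0.ne'] at h2'
    have h4 : t * (s / t - 1) = s - t := by field_simp
    rw [h4] at h2'
    rw [Real.log_inv]
    nlinarith

def mHull {U : Type*} [MeasurableSpace U] (f : U) : Set U :=
  ⋂₀ {t : Set U | MeasurableSet t ∧ f ∈ t}

lemma mHull_measurableSet {U : Type*} [Finite U] [MeasurableSpace U] (f : U) :
    MeasurableSet (mHull f) :=
  MeasurableSet.sInter (Set.to_countable _) (fun _ ht => ht.1)

lemma mem_mHull {U : Type*} [MeasurableSpace U] (f : U) : f ∈ mHull f :=
  Set.mem_sInter.mpr fun _ ht => ht.2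

lemma dirac_singleton {U : Type*} [Finite U] [MeasurableSpace U] (f b : U) :
    Measure.dirac b {f} = (mHull f).indicator (1 : U → ENNReal) b := by
  rw [← Measure.dirac_apply' b (mHull_measurableSet f)]
  apply le_antisymm
  · exact measure_mono (Set.singleton_subset_iff.mpr (mem_mHull f))
  · by_cases hb : b ∈ mHull f
    · conv_rhs => rw [measure_eq_iInf]
      refine le_iInf fun t => le_iInf fun hst => le_iInf fun htm => ?_
      have hft : f ∈ t := hst rfl
      have hsub : mHull f ⊆ t := Set.sInter_subset_of_mem ⟨htm, hft⟩
      rw [Measure.dirac_apply' _ htm, Measure.dirac_apply' _ (mHull_measurableSet f)]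
      simp [Set.indicator_of_mem hb, Set.indicator_of_mem (hsub hb)]
    · rw [Measure.dirac_apply' _ (mHull_measurableSet f), Set.indicator_of_notMem hb]
      exact zero_le

lemma empBlock_apply' {X : Type*} [Finite X] [MeasurableSpace X] (k n : ℕ) (x : ℕ → X)
    (f : Fin k → X) :
    empBlock k n x {f} = ((n - k + 1 : ℕ) : ENNReal)⁻¹ *
      ∑ l ∈ Finset.range (n - k + 1),
        (mHull f).indicator (1 : (Fin k → X) → ENNReal) (fun i : Fin k => x (l + (i : ℕ))) := by
  rw [empBlock, Measure.smul_apply, Measure.finset_sum_apply, smul_eq_mul]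
  exact congrArg _ (Finset.sum_congr rfl fun l _ => dirac_singleton f _)

lemma empBlock_univ {X : Type*} [MeasurableSpace X] (k n : ℕ) (x : ℕ → X) :
    empBlock k n x Set.univ = 1 := by
  rw [empBlock, Measure.smul_apply, Measure.finset_sum_apply, smul_eq_mul]
  simp only [measure_univ]
  rw [Finset.sum_const, Finset.card_range, nsmul_eq_mul, mul_one]
  exact ENNReal.inv_mul_cancel (Nat.cast_ne_zero.mpr (Nat.succ_ne_zero _))
    (ENNReal.natCast_ne_top _)

/-- entropy estimation error of the empirical `k`-block measure. -/
theorem expected_entropy_error {X : Type*} [Fintype X] [Nonempty X] [MeasurableSpace X]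
    (μ : Measure (ℕ → X)) [IsProbabilityMeasure μ] (hμ : Stationary μ)
    (u : ℕ → ℕ → ℝ)
    (hu : ∀ k : ℕ, Tendsto (fun n => u k n) atTop (𝓝 0))
    (hbound : ∀ k : ℕ, ∀ᶠ n in atTop,
      ∫ x, l1dist (marginal k μ) (empBlock k n x) ∂μ ≤ u k n) :
    ∀ k : ℕ, 1 ≤ k → ∀ᶠ n in atTop,
      ∫ x, |shEntropy (marginal k μ) - shEntropy (empBlock k n x)| ∂μ ≤
        u k n * Real.log ((Fintype.card X : ℝ) ^ (3 * k) / u k n) := by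
  intro k hk
  have hev : ∀ᶠ n in atTop, u k n < 1 := (hu k).eventually_lt_const one_pos
  filter_upwards [hbound k, hev] with n hb hu1
  classical
  set un := u k n with hun
  have hg : Measurable (fun x : ℕ → X => fun i : Fin k => x (i : ℕ)) :=
    measurable_pi_lambda _ fun i => measurable_pi_apply _
  have hαuniv : marginal k μ Set.univ = 1 := by
    rw [marginal, Measure.map_apply hg MeasurableSet.univ, Set.preimage_univ, measure_univ]
  set p : (Fin k → X) → ℝ := fun f => ((marginal k μ) {f}).toReal with hp
  set q : (ℕ → X) → (Fin k → X) → ℝ := fun x f => ((empBlock k n x) {f}).toReal with hq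
  have hp0 : ∀ f, 0 ≤ p f := fun f => ENNReal.toReal_nonneg
  have hp1 : ∀ f, p f ≤ 1 := by
    intro f
    have h1 : marginal k μ {f} ≤ 1 := by
      rw [← hαuniv]; exact measure_mono (Set.subset_univ _)
    simpa using ENNReal.toReal_mono ENNReal.one_ne_top h1
  have hq0 : ∀ x f, 0 ≤ q x f := fun x f => ENNReal.toReal_nonneg
  have hq1 : ∀ x f, q x f ≤ 1 := by
    intro x f
    have h1 : empBlock k n x {f} ≤ 1 := by
      rw [← empBlock_univ k n x]; exact measure_mono (Set.subset_univ _)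
    simpa using ENNReal.toReal_mono ENNReal.one_ne_top h1
  have hmq : ∀ f, Measurable fun x : ℕ → X => q x f := by
    intro f
    have hrw : ∀ x : ℕ → X, empBlock k n x {f} = ((n - k + 1 : ℕ) : ENNReal)⁻¹ *
        ∑ l ∈ Finset.range (n - k + 1),
          (mHull f).indicator (1 : (Fin k → X) → ENNReal) (fun i : Fin k => x (l + (i : ℕ))) :=
      fun x => empBlock_apply' k n x f
    simp only [hq, hrw]
    apply Measurable.ennreal_toReal
    apply Measurable.const_mul
    apply Finset.measurable_sum
    intro l _
    exact (measurable_one.indicator (mHull_measurableSet f)).comp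
      (measurable_pi_lambda _ fun i => measurable_pi_apply _)
  have hd_eq : ∀ x, l1dist (marginal k μ) (empBlock k n x) = ∑ f, |p f - q x f| :=
    fun x => rfl
  have hd0 : ∀ x, 0 ≤ l1dist (marginal k μ) (empBlock k n x) := by
    intro x; rw [hd_eq]; exact Finset.sum_nonneg fun f _ => abs_nonneg _
  have hdmeas : Measurable fun x => l1dist (marginal k μ) (empBlock k n x) := by
    simp only [hd_eq]
    exact Finset.measurable_sum _ fun f _ => (measurable_const.sub (hmq f)).abs
  have hdint : Integrable (fun x => l1dist (marginal k μ) (empBlock k n x)) μ := by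
    refine Integrable.mono' (integrable_const (Fintype.card (Fin k → X) : ℝ))
      hdmeas.aestronglyMeasurable (ae_of_all _ fun x => ?_)
    rw [Real.norm_eq_abs, abs_of_nonneg (hd0 x), hd_eq]
    calc ∑ f, |p f - q x f| ≤ ∑ _f : Fin k → X, (1 : ℝ) := by
          refine Finset.sum_le_sum fun f _ => ?_
          rw [abs_le]
          constructor
          · linarith [hp0 f, hq1 x f]
          · linarith [hp1 f, hq0 x f]
      _ = (Fintype.card (Fin k → X) : ℝ) := by simp
  have hun0 : 0 ≤ un := le_trans (integral_nonneg hd0) hb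
  have hkey : ∀ x, (∀ f, p f = q x f) →
      |shEntropy (marginal k μ) - shEntropy (empBlock k n x)| = 0 := by
    intro x h
    have hE : shEntropy (marginal k μ) = shEntropy (empBlock k n x) := by
      simp only [shEntropy]
      congr 1
      exact Finset.sum_congr rfl fun f _ =>
        show p f * Real.log (p f) = q x f * Real.log (q x f) by rw [h f]
    rw [hE, sub_self, abs_zero]
  rcases eq_or_lt_of_le hun0 with h0 | hupos
  · rw [← h0, zero_mul]
    have hd0' : ∫ x, l1dist (marginal k μ) (empBlock k n x) ∂μ = 0 :=
      le_antisymm (le_of_le_of_eq hb h0.symm) (integral_nonneg hd0)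
    have hae := (integral_eq_zero_iff_of_nonneg hd0 hdint).mp hd0'
    have hZ : ∀ᵐ x ∂μ, |shEntropy (marginal k μ) - shEntropy (empBlock k n x)| = 0 := by
      filter_upwards [hae] with x hx
      have hx' : ∑ f, |p f - q x f| = 0 := by rw [← hd_eq]; simpa using hx
      refine hkey x fun f => ?_
      have h1 := (Finset.sum_eq_zero_iff_of_nonneg (fun f _ => abs_nonneg _)).mp hx' f
        (Finset.mem_univ f)
      have h2 := abs_eq_zero.mp h1
      linarith
    have : ∫ x, |shEntropy (marginal k μ) - shEntropy (empBlock k n x)| ∂μ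
        = ∫ _x, (0 : ℝ) ∂μ := integral_congr_ae hZ
    rw [this, integral_zero]
  · have hcard1 : 1 ≤ Fintype.card X := Fintype.card_pos
    rcases eq_or_lt_of_le hcard1 with hc1 | hc2
    · -- card X = 1
      haveI hsX : Subsingleton X := Fintype.card_le_one_iff_subsingleton.mp (le_of_eq hc1.symm)
      have hZ : ∀ x : ℕ → X, |shEntropy (marginal k μ) - shEntropy (empBlock k n x)| = 0 := by
        intro x
        refine hkey x fun f => ?_
        have hf : ({f} : Set (Fin k → X)) = Set.univ :=
          Set.eq_univ_of_forall fun g => Set.mem_singleton_iff.mpr (Subsingleton.elim g f)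
        show ((marginal k μ) {f}).toReal = ((empBlock k n x) {f}).toReal
        rw [hf, hαuniv, empBlock_univ k n x]
      simp only [hZ, integral_zero]
      have hcR : (Fintype.card X : ℝ) = 1 := by exact_mod_cast hc1.symm
      rw [hcR, one_pow]
      refine mul_nonneg hun0 (Real.log_nonneg ?_)
      rw [le_div_iff₀ hupos]
      linarith
    · -- 2 ≤ card X
      set M := Fintype.card (Fin k → X) with hM
      have hMk : M = Fintype.card X ^ k := by rw [hM, Fintype.card_fun, Fintype.card_fin]
      have hM1 : 1 ≤ M := Fintype.card_pos
      have hMpos : (0 : ℝ) < (M : ℝ) := by exact_mod_cast hM1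
      set s := un / (M : ℝ) with hs
      have hspos : 0 < s := div_pos hupos hMpos
      have hunleM : un ≤ (M : ℝ) := le_trans hu1.le (by exact_mod_cast hM1)
      set L := Real.log s⁻¹ with hL
      have hL0 : 0 ≤ L := by
        rw [hL, hs, inv_div]
        exact Real.log_nonneg ((one_le_div hupos).mpr hunleM)
      have hpt : ∀ x, |shEntropy (marginal k μ) - shEntropy (empBlock k n x)| ≤
          L * l1dist (marginal k μ) (empBlock k n x) + un := by
        intro x
        have e1 : shEntropy (marginal k μ) - shEntropy (empBlock k n x)
            = ∑ f, (q x f * Real.log (q x f) - p f * Real.log (p f)) := by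
          simp only [shEntropy]
          rw [Finset.sum_sub_distrib]
          ring
        rw [e1]
        calc |∑ f, (q x f * Real.log (q x f) - p f * Real.log (p f))|
            ≤ ∑ f, |q x f * Real.log (q x f) - p f * Real.log (p f)| :=
              Finset.abs_sum_le_sum_abs _ _
          _ ≤ ∑ f, (|q x f - p f| * L + s) := by
              refine Finset.sum_le_sum fun f _ => ?_
              have hA := entropy_term_abs (q x f) (p f) (hq0 x f) (hq1 x f) (hp0 f) (hp1 f)
              have hB := neg_mul_log_le |q x f - p f| s (abs_nonneg _) hspos
              rw [← hL] at hB
              nlinarith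
          _ = (∑ f, |q x f - p f|) * L + (M : ℝ) * s := by
              rw [Finset.sum_add_distrib, ← Finset.sum_mul, Finset.sum_const, Finset.card_univ,
                nsmul_eq_mul]
          _ = l1dist (marginal k μ) (empBlock k n x) * L + un := by
              rw [hd_eq x]
              congr 1
              · congr 1
                exact Finset.sum_congr rfl fun f _ => abs_sub_comm _ _
              · rw [hs]
                field_simp
          _ = L * l1dist (marginal k μ) (empBlock k n x) + un := by ring
      have hint2 : Integrable (fun x => L * l1dist (marginal k μ) (empBlock k n x) + un) μ :=
        (hdint.const_mul L).add (integrable_const un)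
      have step1 : ∫ x, |shEntropy (marginal k μ) - shEntropy (empBlock k n x)| ∂μ
          ≤ ∫ x, (L * l1dist (marginal k μ) (empBlock k n x) + un) ∂μ :=
        integral_mono_of_nonneg (ae_of_all _ fun x => abs_nonneg _) hint2 (ae_of_all _ hpt)
      have step2 : ∫ x, (L * l1dist (marginal k μ) (empBlock k n x) + un) ∂μ
          = L * (∫ x, l1dist (marginal k μ) (empBlock k n x) ∂μ) + un := by
        rw [integral_add (hdint.const_mul L) (integrable_const un), integral_const_mul,
          integral_const, probReal_univ, one_smul]
      have step3 : L * (∫ x, l1dist (marginal k μ) (empBlock k n x) ∂μ) + un ≤ L * un + un := by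
        have := mul_le_mul_of_nonneg_left hb hL0
        linarith
      have hMc : ((M : ℕ) : ℝ) = (Fintype.card X : ℝ) ^ k := by
        rw [hMk]; push_cast; ring
      have hLe : L = (k : ℝ) * Real.log (Fintype.card X : ℝ) - Real.log un := by
        rw [hL, hs, inv_div, Real.log_div (ne_of_gt hMpos) hupos.ne', hMc, Real.log_pow]
      have hc2R : (2 : ℝ) ≤ (Fintype.card X : ℝ) := by exact_mod_cast hc2
      have hlog2 : (0.6931471803 : ℝ) < Real.log 2 := Real.log_two_gt_d9
      have hlogc : Real.log 2 ≤ Real.log (Fintype.card X : ℝ) :=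
        Real.log_le_log (by norm_num) hc2R
      have hkR : (1 : ℝ) ≤ (k : ℝ) := by exact_mod_cast hk
      have hfinal : L * un + un ≤ un * Real.log ((Fintype.card X : ℝ) ^ (3 * k) / un) := by
        rw [Real.log_div (ne_of_gt (by positivity)) hupos.ne', Real.log_pow, hLe]
        push_cast
        have hlc0 : (0 : ℝ) ≤ Real.log (Fintype.card X : ℝ) := by linarith
        have h2 : Real.log (Fintype.card X : ℝ) ≤ (k : ℝ) * Real.log (Fintype.card X : ℝ) :=
          le_mul_of_one_le_left hlc0 hkR
        have h1 : (1 : ℝ) ≤ 2 * ((k : ℝ) * Real.log (Fintype.card X : ℝ)) := by nlinarith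
        nlinarith [mul_le_mul_of_nonneg_left h1 hun0]
      calc ∫ x, |shEntropy (marginal k μ) - shEntropy (empBlock k n x)| ∂μ
          ≤ L * (∫ x, l1dist (marginal k μ) (empBlock k n x) ∂μ) + un := by
            rw [← step2]; exact step1
        _ ≤ L * un + un := step3
        _ ≤ un * Real.log ((Fintype.card X : ℝ) ^ (3 * k) / un) := hfinal


end
end
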